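/- arXiv:2102.01637 — 10 statements merged into one kernel-verified Lean document; each statement's English description precedes it below -/
import Mathlib

section
/- For all real numbers 0 < a_s ≤ a, the integral ∫_{a_s}^{a} (Ω_M/x + Ω_Λ·x²)^{-1/2} dx equals (2/(3·√Ω_Λ))·ln[(Ω_Λ·a^{3/2} + √Ω_Λ·√(Ω_M + Ω_Λ·a³)) / (Ω_Λ·a_s^{3/2} + √Ω_Λ·√(Ω_M + Ω_Λ·a_s³))]. -/
open Real MeasureTheory intervalIntegral

/-- For all real `0 < a_s ≤ a`, the integral `∫_{a_s}^{a} (Ω_M/x + Ω_Λ·x²)^{-1/2} dx`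
equals `(2/(3√Ω_Λ))·ln[(Ω_Λ·a^{3/2} + √Ω_Λ·√(Ω_M + Ω_Λ·a³)) /
(Ω_Λ·a_s^{3/2} + √Ω_Λ·√(Ω_M + Ω_Λ·a_s³))]`. -/
theorem stmt_1 (ΩM ΩΛ : ℝ) (hM : 0 < ΩM) (hΛ : 0 < ΩΛ) :
    ∀ as a : ℝ, 0 < as → as ≤ a →
      ∫ x in as..a, (ΩM / x + ΩΛ * x ^ 2) ^ (-(1:ℝ)/2) =
        (2 / (3 * Real.sqrt ΩΛ)) *
          Real.log ((ΩΛ * a ^ ((3:ℝ)/2) + Real.sqrt ΩΛ * Real.sqrt (ΩM + ΩΛ * a ^ 3)) /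
            (ΩΛ * as ^ ((3:ℝ)/2) + Real.sqrt ΩΛ * Real.sqrt (ΩM + ΩΛ * as ^ 3))) := by
  intro as a has hle
  have hw : 0 < Real.sqrt ΩΛ := Real.sqrt_pos.mpr hΛ
  have hA : ∀ x : ℝ, 0 < x → 0 < ΩM + ΩΛ * x ^ 3 := fun x hx => by positivity
  set f : ℝ → ℝ := fun x => Real.sqrt x / Real.sqrt (ΩM + ΩΛ * x ^ 3) with hf
  set g : ℝ → ℝ := fun x => ΩΛ * (x * Real.sqrt x) + Real.sqrt ΩΛ * Real.sqrt (ΩM + ΩΛ * x ^ 3) with hg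
  have hgpos : ∀ x : ℝ, 0 < x → 0 < g x := by
    intro x hx
    have h1 := hA x hx
    have h2 : 0 < Real.sqrt (ΩM + ΩΛ * x ^ 3) := Real.sqrt_pos.mpr h1
    have hsx : 0 < Real.sqrt x := Real.sqrt_pos.mpr hx
    simp only [hg]
    positivity
  have hcong : Set.EqOn (fun x => (ΩM / x + ΩΛ * x ^ 2) ^ (-(1:ℝ)/2)) f (Set.uIcc as a) := by
    intro x hx'
    rw [Set.uIcc_of_le hle] at hx'
    have hx : 0 < x := lt_of_lt_of_le has hx'.1
    have hAx := hA x hx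
    have hbase : ΩM / x + ΩΛ * x ^ 2 = (ΩM + ΩΛ * x ^ 3) / x := by
      field_simp
    simp only [hf]
    rw [hbase, show (-(1:ℝ)/2) = -(1/2) by norm_num,
      Real.rpow_neg (by positivity), ← Real.sqrt_eq_rpow,
      Real.sqrt_div hAx.le, inv_div]
  have hderiv : ∀ x ∈ Set.uIcc as a,
      HasDerivAt (fun y => (2 / (3 * Real.sqrt ΩΛ)) * Real.log (g y)) (f x) x := by
    intro x hx'
    rw [Set.uIcc_of_le hle] at hx'
    have hx : 0 < x := lt_of_lt_of_le has hx'.1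
    have hAx := hA x hx
    have hsx : 0 < Real.sqrt x := Real.sqrt_pos.mpr hx
    have hsA : 0 < Real.sqrt (ΩM + ΩΛ * x ^ 3) := Real.sqrt_pos.mpr hAx
    have h1 : HasDerivAt (fun y : ℝ => y * Real.sqrt y)
        (1 * Real.sqrt x + x * (1 / (2 * Real.sqrt x))) x :=
      (hasDerivAt_id x).mul (Real.hasDerivAt_sqrt hx.ne')
    have h2 : HasDerivAt (fun y : ℝ => ΩM + ΩΛ * y ^ 3) (ΩΛ * (3 * x ^ 2)) x := by
      have h := ((hasDerivAt_pow 3 x).const_mul ΩΛ).const_add ΩM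
      simpa using h
    have h3 : HasDerivAt (fun y : ℝ => Real.sqrt (ΩM + ΩΛ * y ^ 3))
        (1 / (2 * Real.sqrt (ΩM + ΩΛ * x ^ 3)) * (ΩΛ * (3 * x ^ 2))) x :=
      (Real.hasDerivAt_sqrt hAx.ne').comp x h2
    have hg' : HasDerivAt g
        (ΩΛ * (1 * Real.sqrt x + x * (1 / (2 * Real.sqrt x))) +
          Real.sqrt ΩΛ * (1 / (2 * Real.sqrt (ΩM + ΩΛ * x ^ 3)) * (ΩΛ * (3 * x ^ 2)))) x :=
      (h1.const_mul ΩΛ).add (h3.const_mul (Real.sqrt ΩΛ))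
    have hgx := hgpos x hx
    have hlog := (hg'.log hgx.ne').const_mul (2 / (3 * Real.sqrt ΩΛ))
    convert hlog using 1
    case e'_4 => rfl
    case e'_5 => rfl
    simp only [hf, hg]
    have hu : Real.sqrt x ^ 2 = x := Real.sq_sqrt hx.le
    have hv : Real.sqrt (ΩM + ΩΛ * x ^ 3) ^ 2 = ΩM + ΩΛ * x ^ 3 := Real.sq_sqrt hAx.le
    have hw2 : Real.sqrt ΩΛ ^ 2 = ΩΛ := Real.sq_sqrt hΛ.le
    rw [div_eq_iff hsA.ne']
    field_simp
    generalize Real.sqrt (ΩM + ΩΛ * x ^ 3) = t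
    generalize Real.sqrt x = u at hu ⊢
    generalize Real.sqrt ΩΛ = w at hw2 ⊢
    rw [← hu, ← hw2]
    ring
  have hfc : ContinuousOn f (Set.uIcc as a) := by
    apply ContinuousOn.div
    · exact Real.continuous_sqrt.continuousOn
    · exact (Real.continuous_sqrt.comp (by continuity)).continuousOn
    · intro x hx'
      rw [Set.uIcc_of_le hle] at hx'
      have hx : 0 < x := lt_of_lt_of_le has hx'.1
      exact (Real.sqrt_pos.mpr (hA x hx)).ne'
  rw [intervalIntegral.integral_congr hcong,
    intervalIntegral.integral_eq_sub_of_hasDerivAt hderiv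
      (hfc.intervalIntegrable)]
  have hr : ∀ x : ℝ, 0 < x → x ^ ((3:ℝ)/2) = x * Real.sqrt x := by
    intro x hx
    rw [show (3:ℝ)/2 = 1 + 1/2 by norm_num, Real.rpow_add hx, Real.rpow_one,
      ← Real.sqrt_eq_rpow]
  rw [← mul_sub, ← Real.log_div (hgpos a (lt_of_lt_of_le has hle)).ne' (hgpos as has).ne',
    hr a (lt_of_lt_of_le has hle), hr as has]
end

section
/- For every real t with 0 ≤ t ≤ t₁ (so that −1 ≤ X(t) ≤ 1), the number a₁(t) = (Ω_R/Ω_M)·[1 − 2·sin((1/3)·arcsin X(t))] satisfies P(a₁(t), t) = 0. -/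
open Real

/-- For every real `t` with `0 ≤ t ≤ t₁` (so that `−1 ≤ X(t) ≤ 1`), the number
`a₁(t) = (Ω_R/Ω_M)·[1 − 2·sin((1/3)·arcsin X(t))]` satisfies `P(a₁(t), t) = 0`. -/
theorem stmt_3 (ΩR ΩM H0 : ℝ) (hR : 0 < ΩR) (hM : 0 < ΩM) (hH : 0 < H0)
    (X : ℝ → ℝ)
    (hX : ∀ t, X t = 1 - 3 * (ΩM ^ 2 / ΩR ^ ((3:ℝ)/2)) * H0 * t
      + (9/8) * (ΩM ^ 4 / ΩR ^ 3) * H0 ^ 2 * t ^ 2)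
    (P : ℝ → ℝ → ℝ)
    (hP : ∀ a t, P a t = 4 * ΩM ^ 3 * a ^ 3 - 12 * ΩM ^ 2 * ΩR * a ^ 2
      - 9 * ΩM ^ 4 * H0 ^ 2 * t ^ 2 + 24 * ΩM ^ 2 * ΩR ^ ((3:ℝ)/2) * H0 * t)
    (t1 : ℝ) (ht1 : t1 = 8 * ΩR ^ ((3:ℝ)/2) / (3 * ΩM ^ 2 * H0)) :
    ∀ t : ℝ, 0 ≤ t → t ≤ t1 →
      (-1 ≤ X t ∧ X t ≤ 1) ∧
      P ((ΩR / ΩM) * (1 - 2 * Real.sin ((1/3) * Real.arcsin (X t)))) t = 0 := by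
  intro t ht0 htle
  set r : ℝ := ΩR ^ ((3:ℝ)/2) with hrdef
  have hr : 0 < r := Real.rpow_pos_of_pos hR _
  have hr2 : r ^ 2 = ΩR ^ 3 := by
    rw [hrdef, ← Real.rpow_natCast (ΩR ^ ((3:ℝ)/2)) 2, ← Real.rpow_mul hR.le,
      ← Real.rpow_natCast ΩR 3]
    norm_num
  set v : ℝ := ΩM ^ 2 * H0 * t / r with hvdef
  have hvt : ΩM ^ 2 * H0 * t = v * r := by
    rw [hvdef]; field_simp
  have hv0 : 0 ≤ v := by positivity
  have hv83 : v ≤ 8 / 3 := by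
    rw [hvdef, div_le_iff₀ hr]
    rw [ht1, le_div_iff₀ (by positivity)] at htle
    nlinarith
  clear_value v
  have hXv : X t = 1 - 3 * v + 9/8 * v ^ 2 := by
    rw [hX, hvdef, ← hr2]
    field_simp
  have hXm1 : -1 ≤ X t := by rw [hXv]; nlinarith [sq_nonneg (v - 4/3)]
  have hX1 : X t ≤ 1 := by rw [hXv]; nlinarith
  refine ⟨⟨hXm1, hX1⟩, ?_⟩
  set s : ℝ := Real.sin ((1/3) * Real.arcsin (X t)) with hsdef
  have hs : X t = 3 * s - 4 * s ^ 3 := by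
    have h3 : Real.sin (3 * ((1/3) * Real.arcsin (X t)))
        = 3 * s - 4 * s ^ 3 := Real.sin_three_mul _
    rwa [show (3:ℝ) * ((1/3) * Real.arcsin (X t)) = Real.arcsin (X t) by ring,
      Real.sin_arcsin hXm1 hX1] at h3
  have key : 4 * (1 - 2*s)^3 - 12 * (1 - 2*s)^2 - 9 * v^2 + 24 * v = 0 := by
    linear_combination 8 * hXv - 8 * hs
  rw [hP]
  have hMne : ΩM ≠ 0 := hM.ne'
  have e1 : 4 * ΩM ^ 3 * (ΩR / ΩM * (1 - 2 * s)) ^ 3 = 4 * ΩR ^ 3 * (1 - 2*s) ^ 3 := by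
    field_simp
  have e2 : 12 * ΩM ^ 2 * ΩR * (ΩR / ΩM * (1 - 2 * s)) ^ 2 = 12 * ΩR ^ 3 * (1 - 2*s) ^ 2 := by
    field_simp
  rw [e1, e2, ← hr2]
  linear_combination r ^ 2 * key + (24 * r - 9 * (ΩM ^ 2 * H0 * t + v * r)) * hvt
end

section
/- For every real t with 0 ≤ t ≤ t₁ (so that −1 ≤ X(t) ≤ 1), the number a₂(t) = (Ω_R/Ω_M)·[1 + 2·cos((1/3)·arccos X(t))] satisfies P(a₂(t), t) = 0. -/
open Real

/-- For every real `t` with `0 ≤ t ≤ t₁` (so that `−1 ≤ X(t) ≤ 1`), the number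
`a₂(t) = (Ω_R/Ω_M)·[1 + 2·cos((1/3)·arccos X(t))]` satisfies `P(a₂(t), t) = 0`. -/
theorem stmt_4 (ΩR ΩM H0 : ℝ) (hR : 0 < ΩR) (hM : 0 < ΩM) (hH : 0 < H0)
    (X : ℝ → ℝ)
    (hX : ∀ t, X t = 1 - 3 * (ΩM ^ 2 / ΩR ^ ((3:ℝ)/2)) * H0 * t
      + (9/8) * (ΩM ^ 4 / ΩR ^ 3) * H0 ^ 2 * t ^ 2)
    (P : ℝ → ℝ → ℝ)
    (hP : ∀ a t, P a t = 4 * ΩM ^ 3 * a ^ 3 - 12 * ΩM ^ 2 * ΩR * a ^ 2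
      - 9 * ΩM ^ 4 * H0 ^ 2 * t ^ 2 + 24 * ΩM ^ 2 * ΩR ^ ((3:ℝ)/2) * H0 * t)
    (t1 : ℝ) (ht1 : t1 = 8 * ΩR ^ ((3:ℝ)/2) / (3 * ΩM ^ 2 * H0)) :
    ∀ t : ℝ, 0 ≤ t → t ≤ t1 →
      (-1 ≤ X t ∧ X t ≤ 1) ∧
      P ((ΩR / ΩM) * (1 + 2 * Real.cos ((1/3) * Real.arccos (X t)))) t = 0 := by
  intro t ht0 ht1'
  set r := ΩR ^ ((3:ℝ)/2) with hrdef
  have hr : 0 < r := Real.rpow_pos_of_pos hR _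
  have hr2 : r * r = ΩR ^ 3 := by
    rw [hrdef, ← Real.rpow_natCast ΩR 3, ← Real.rpow_add hR]; norm_num
  set v := ΩM ^ 2 * H0 * t / r with hvdef
  have hu : ΩM ^ 2 * H0 * t = v * r := by rw [hvdef, div_mul_cancel₀ _ hr.ne']
  have hv0 : 0 ≤ v := by apply div_nonneg _ hr.le; positivity
  have hle : t * (3 * ΩM ^ 2 * H0) ≤ 8 * r := by
    rw [ht1] at ht1'
    exact (le_div_iff₀ (by positivity)).mp ht1'
  have hv8 : v ≤ 8 / 3 := by
    rw [hvdef, div_le_iff₀ hr]; nlinarith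
  have e1 : 3 * (ΩM ^ 2 / r) * H0 * t = 3 * v := by rw [hvdef]; ring
  have e2 : (9/8) * (ΩM ^ 4 / ΩR ^ 3) * H0 ^ 2 * t ^ 2 = 9/8 * v ^ 2 := by
    rw [hvdef, ← hr2]; field_simp
  have hXv : X t = 1 - 3 * v + 9/8 * v ^ 2 := by rw [hX t, e1, e2]
  have hb1 : -1 ≤ X t := by rw [hXv]; nlinarith [sq_nonneg (v - 4/3)]
  have hb2 : X t ≤ 1 := by
    rw [hXv]; nlinarith [mul_nonneg hv0 (by linarith : (0:ℝ) ≤ 8 - 3 * v)]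
  refine ⟨⟨hb1, hb2⟩, ?_⟩
  set c := Real.cos ((1/3) * Real.arccos (X t)) with hcdef
  have hc3 : 4 * c ^ 3 - 3 * c = X t := by
    have h := Real.cos_three_mul ((1/3) * Real.arccos (X t))
    rw [show (3:ℝ) * ((1/3) * Real.arccos (X t)) = Real.arccos (X t) by ring,
      Real.cos_arccos hb1 hb2] at h
    rw [← hcdef] at h
    linarith
  have hkey : 4 * c ^ 3 - 3 * c = 1 - 3 * v + 9/8 * v ^ 2 := hc3.trans hXv
  have hM' : ΩM ≠ 0 := hM.ne'
  have h1 : 4 * ΩM ^ 3 * ((ΩR / ΩM) * (1 + 2 * c)) ^ 3 = 4 * ΩR ^ 3 * (1 + 2 * c) ^ 3 := by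
    field_simp
  have h2 : 12 * ΩM ^ 2 * ΩR * ((ΩR / ΩM) * (1 + 2 * c)) ^ 2 = 12 * ΩR ^ 3 * (1 + 2 * c) ^ 2 := by
    field_simp
  have h3 : 9 * ΩM ^ 4 * H0 ^ 2 * t ^ 2 = 9 * v ^ 2 * ΩR ^ 3 := by
    linear_combination 9 * (ΩM ^ 2 * H0 * t + v * r) * hu + 9 * v ^ 2 * hr2
  have h4 : 24 * ΩM ^ 2 * r * H0 * t = 24 * v * ΩR ^ 3 := by
    linear_combination 24 * r * hu + 24 * v * hr2
  rw [hP, h1, h2, h3, h4]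
  linear_combination 8 * ΩR ^ 3 * hkey
end

section
/- For every real t with 0 ≤ t ≤ t₁ (so that −1 ≤ X(t) ≤ 1), the number a₃(t) = (Ω_R/Ω_M)·[1 + 2·cos((2π + arccos X(t))/3)] satisfies P(a₃(t), t) = 0. -/
open Real

/-- For every real `t` with `0 ≤ t ≤ t₁` (so that `−1 ≤ X(t) ≤ 1`), the number
`a₃(t) = (Ω_R/Ω_M)·[1 + 2·cos((2π + arccos X(t))/3)]` satisfies `P(a₃(t), t) = 0`. -/
theorem stmt_5 (ΩR ΩM H0 : ℝ) (hR : 0 < ΩR) (hM : 0 < ΩM) (hH : 0 < H0)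
    (X : ℝ → ℝ)
    (hX : ∀ t, X t = 1 - 3 * (ΩM ^ 2 / ΩR ^ ((3:ℝ)/2)) * H0 * t
      + (9/8) * (ΩM ^ 4 / ΩR ^ 3) * H0 ^ 2 * t ^ 2)
    (P : ℝ → ℝ → ℝ)
    (hP : ∀ a t, P a t = 4 * ΩM ^ 3 * a ^ 3 - 12 * ΩM ^ 2 * ΩR * a ^ 2
      - 9 * ΩM ^ 4 * H0 ^ 2 * t ^ 2 + 24 * ΩM ^ 2 * ΩR ^ ((3:ℝ)/2) * H0 * t)
    (t1 : ℝ) (ht1 : t1 = 8 * ΩR ^ ((3:ℝ)/2) / (3 * ΩM ^ 2 * H0)) :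
    ∀ t : ℝ, 0 ≤ t → t ≤ t1 →
      (-1 ≤ X t ∧ X t ≤ 1) ∧
      P ((ΩR / ΩM) * (1 + 2 * Real.cos ((2 * Real.pi + Real.arccos (X t)) / 3))) t = 0 := by
  intro t ht0 ht1'
  set s : ℝ := ΩR ^ ((3:ℝ)/2) with hs_def
  have hs : 0 < s := Real.rpow_pos_of_pos hR _
  have hs2 : s ^ 2 = ΩR ^ 3 := by
    rw [hs_def, ← Real.rpow_natCast (ΩR ^ ((3:ℝ)/2)) 2, ← Real.rpow_mul hR.le,
      ← Real.rpow_natCast ΩR 3]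
    norm_num
  have htle : 3 * ΩM ^ 2 * H0 * t ≤ 8 * s := by
    have h : t ≤ 8 * s / (3 * ΩM ^ 2 * H0) := ht1 ▸ ht1'
    rw [le_div_iff₀ (by positivity)] at h
    linarith
  have hXt : X t = 1 - 3 * (ΩM ^ 2 / s) * H0 * t
      + (9/8) * (ΩM ^ 4 / ΩR ^ 3) * H0 ^ 2 * t ^ 2 := hX t
  have hlo : -1 ≤ X t := by
    rw [hXt, ← hs2]
    rw [← sub_nonneg]
    have key : (1 - 3 * (ΩM ^ 2 / s) * H0 * t + 9 / 8 * (ΩM ^ 4 / s ^ 2) * H0 ^ 2 * t ^ 2) - (-1)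
        = (9/8) * ((ΩM ^ 2 * H0 * t / s) - 4/3) ^ 2 := by
      field_simp
      ring
    rw [key]; positivity
  have hhi : X t ≤ 1 := by
    rw [hXt, ← hs2]
    have hu0 : 0 ≤ ΩM ^ 2 * H0 * t / s := by positivity
    have hu1 : ΩM ^ 2 * H0 * t / s ≤ 8/3 := by
      rw [div_le_iff₀ hs]; nlinarith
    have key : 1 - 3 * (ΩM ^ 2 / s) * H0 * t + 9 / 8 * (ΩM ^ 4 / s ^ 2) * H0 ^ 2 * t ^ 2
        = 1 + (ΩM ^ 2 * H0 * t / s) * ((9/8) * (ΩM ^ 2 * H0 * t / s) - 3) := by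
      field_simp
      ring
    rw [key]
    nlinarith [hu0, hu1]
  refine ⟨⟨hlo, hhi⟩, ?_⟩
  set c : ℝ := Real.cos ((2 * Real.pi + Real.arccos (X t)) / 3) with hc_def
  have hc : 4 * c ^ 3 - 3 * c = X t := by
    have h3 : (3:ℝ) * ((2 * Real.pi + Real.arccos (X t)) / 3)
        = Real.arccos (X t) + 2 * Real.pi := by ring
    have := Real.cos_three_mul ((2 * Real.pi + Real.arccos (X t)) / 3)
    rw [h3, Real.cos_add_two_pi, Real.cos_arccos hlo hhi] at this
    rw [hc_def, ← this]
  rw [hP]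
  rw [hXt] at hc
  have hM' : ΩM ≠ 0 := hM.ne'
  have hR' : ΩR ≠ 0 := hR.ne'
  have hs' : s ≠ 0 := hs.ne'
  have hc' : s * ΩR ^ 3 * (4 * c ^ 3 - 3 * c)
      = s * ΩR ^ 3 - 3 * ΩM ^ 2 * ΩR ^ 3 * H0 * t + (9/8) * ΩM ^ 4 * s * H0 ^ 2 * t ^ 2 := by
    rw [hc]; field_simp
  have hc'' : ΩR ^ 3 * (4 * c ^ 3 - 3 * c)
      = ΩR ^ 3 - 3 * ΩM ^ 2 * s * H0 * t + (9/8) * ΩM ^ 4 * H0 ^ 2 * t ^ 2 := by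
    apply mul_left_cancel₀ hs'
    linear_combination hc' + 3 * ΩM ^ 2 * H0 * t * hs2
  field_simp
  linear_combination 8 * hc''
end

section
/- For every real t > t₁, there exists exactly one real a with a ≥ 0 and P(a,t) = 0. -/
open Real

/-- For every real `t > t₁`, there exists exactly one real `a` with `a ≥ 0` and `P(a,t) = 0`. -/
theorem stmt_8 (ΩR ΩM H0 : ℝ) (hR : 0 < ΩR) (hM : 0 < ΩM) (hH : 0 < H0)
    (P : ℝ → ℝ → ℝ)
    (hP : ∀ a t, P a t = 4 * ΩM ^ 3 * a ^ 3 - 12 * ΩM ^ 2 * ΩR * a ^ 2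
      - 9 * ΩM ^ 4 * H0 ^ 2 * t ^ 2 + 24 * ΩM ^ 2 * ΩR ^ ((3:ℝ)/2) * H0 * t)
    (t1 : ℝ) (ht1 : t1 = 8 * ΩR ^ ((3:ℝ)/2) / (3 * ΩM ^ 2 * H0)) :
    ∀ t : ℝ, t1 < t → ∃! a : ℝ, 0 ≤ a ∧ P a t = 0 := by
  intro t ht
  have hRpos : 0 < ΩR ^ ((3:ℝ)/2) := Real.rpow_pos_of_pos hR _
  set R : ℝ := ΩR ^ ((3:ℝ)/2) with hRdef
  have ht1pos : 0 < t1 := by rw [ht1]; positivity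
  have htpos : 0 < t := ht1pos.trans ht
  have hkey : 8 * R < 3 * ΩM ^ 2 * H0 * t := by
    rw [ht1, div_lt_iff₀ (by positivity)] at ht
    linarith
  obtain ⟨c, hcdef⟩ : ∃ c : ℝ, c = -(9 * ΩM ^ 4 * H0 ^ 2 * t ^ 2) + 24 * ΩM ^ 2 * R * H0 * t :=
    ⟨_, rfl⟩
  have hupos : 0 < 3 * ΩM ^ 2 * H0 * t := by positivity
  have hc : c < 0 := by
    have h2 := mul_pos hupos (sub_pos.2 hkey)
    rw [hcdef]; nlinarith [h2]
  -- every nonnegative root r satisfies 3ΩR < ΩM * r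
  have hroot_big : ∀ r : ℝ, 0 ≤ r → P r t = 0 → 3 * ΩR < ΩM * r := by
    intro r hr hroot
    rw [hP] at hroot
    have hrne : r ≠ 0 := by
      rintro rfl
      simp at hroot
      nlinarith [hcdef, hc]
    have hrpos : 0 < r := lt_of_le_of_ne hr (Ne.symm hrne)
    by_contra h
    push_neg at h
    nlinarith [mul_pos (pow_pos hM 2) (pow_pos hrpos 2), sq_nonneg r, mul_pos hrpos hrpos]
  -- existence via IVT
  obtain ⟨k, hk⟩ : ∃ k : ℝ, k = 1 - c / 4 := ⟨_, rfl⟩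
  have hk1 : (1:ℝ) ≤ k := by rw [hk]; linarith
  obtain ⟨X, hX⟩ : ∃ X : ℝ, X = (3 * ΩR + k) / ΩM := ⟨_, rfl⟩
  have hMX : ΩM * X = 3 * ΩR + k := by rw [hX]; field_simp
  have hXpos : 0 < X := by rw [hX]; positivity
  have hfX : 0 ≤ P X t := by
    rw [hP]
    have hMX3 : ΩM * X - 3 * ΩR = k := by rw [hMX]; ring
    have hA : 4 * ΩM ^ 3 * X ^ 3 - 12 * ΩM ^ 2 * ΩR * X ^ 2 = 4 * (ΩM * X) ^ 2 * k := by
      linear_combination (4 * (ΩM * X) ^ 2) * hMX3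
    have hXk : k ≤ ΩM * X := by rw [hMX]; linarith
    have h1 : k ^ 2 ≤ (ΩM * X) ^ 2 := by nlinarith
    have h2 : 4 * (ΩM * X) ^ 2 * k ≥ 4 * (k ^ 2 * k) := by nlinarith
    have h3 : 4 * (k ^ 2 * k) ≥ 4 * k := by nlinarith
    linarith [hA, h2, h3, hcdef, hk]
  have hcont : ContinuousOn (fun a => P a t) (Set.Icc 0 X) := by
    have : (fun a => P a t) = fun a => 4 * ΩM ^ 3 * a ^ 3 - 12 * ΩM ^ 2 * ΩR * a ^ 2
        - 9 * ΩM ^ 4 * H0 ^ 2 * t ^ 2 + 24 * ΩM ^ 2 * R * H0 * t := by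
      funext a; rw [hP]
    rw [this]
    fun_prop
  have hf0 : P 0 t = c := by rw [hP, hcdef]; ring
  have hsub := intermediate_value_Icc (le_of_lt hXpos) hcont
  have h0mem : (0:ℝ) ∈ Set.Icc (P 0 t) (P X t) := by
    rw [hf0]; exact ⟨le_of_lt hc, hfX⟩
  obtain ⟨a, haI, hfa0⟩ := hsub h0mem
  have hfa : P a t = 0 := hfa0
  refine ⟨a, ⟨haI.1, hfa⟩, ?_⟩
  intro b hb
  obtain ⟨hb0, hfb⟩ := hb
  have hba := hroot_big b hb0 hfb
  have haa := hroot_big a haI.1 hfa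
  have hmb : 0 < ΩM * b := lt_trans (by positivity) hba
  have hma : 0 < ΩM * a := lt_trans (by positivity) haa
  have hbpos : 0 < b := by
    rcases mul_pos_iff.1 hmb with ⟨_, h⟩ | ⟨h, _⟩
    · exact h
    · linarith
  have hapos : 0 < a := by
    rcases mul_pos_iff.1 hma with ⟨_, h⟩ | ⟨h, _⟩
    · exact h
    · linarith
  have hfac : (b - a) * (4 * ΩM ^ 3 * (b ^ 2 + b * a + a ^ 2)
      - 12 * ΩM ^ 2 * ΩR * (b + a)) = 0 := by
    have h1 := hfb; have h2 := hfa
    rw [hP] at h1 h2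
    linear_combination h1 - h2
  have hposf : 0 < 4 * ΩM ^ 3 * (b ^ 2 + b * a + a ^ 2)
      - 12 * ΩM ^ 2 * ΩR * (b + a) := by
    have t1' : 0 < ΩM ^ 2 * (b * (ΩM * b - 3 * ΩR)) :=
      mul_pos (pow_pos hM 2) (mul_pos hbpos (sub_pos.2 hba))
    have t2' : 0 < ΩM ^ 2 * (a * (ΩM * a - 3 * ΩR)) :=
      mul_pos (pow_pos hM 2) (mul_pos hapos (sub_pos.2 haa))
    have t3' : 0 < ΩM ^ 3 * (b * a) := mul_pos (pow_pos hM 3) (mul_pos hbpos hapos)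
    linarith [t1', t2', t3']
  rcases mul_eq_zero.1 hfac with h | h
  · linarith
  · linarith
end

section
/- For every real t ≥ t₁ (so that X(t) ≥ 1), the number a_h(t) = (Ω_R/Ω_M)·[1 + 2·cosh((1/3)·ln(X(t) + √(X(t)² − 1)))] satisfies P(a_h(t), t) = 0; in particular the hyperbolic expression a_h is a real root of the cubic for X(t) ≥ 1. -/
open Real

set_option maxHeartbeats 1600000 in
/-- For every real `t ≥ t₁` (so that `X(t) ≥ 1`), the number
`a_h(t) = (Ω_R/Ω_M)·[1 + 2·cosh((1/3)·ln(X(t) + √(X(t)² − 1)))]` satisfies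
`P(a_h(t), t) = 0`; in particular the hyperbolic expression `a_h` is a real root of
the cubic for `X(t) ≥ 1`. -/
theorem stmt_13 (ΩR ΩM H0 : ℝ) (hR : 0 < ΩR) (hM : 0 < ΩM) (hH : 0 < H0)
    (X : ℝ → ℝ)
    (hX : ∀ t, X t = 1 - 3 * (ΩM ^ 2 / ΩR ^ ((3:ℝ)/2)) * H0 * t
      + (9/8) * (ΩM ^ 4 / ΩR ^ 3) * H0 ^ 2 * t ^ 2)
    (P : ℝ → ℝ → ℝ)
    (hP : ∀ a t, P a t = 4 * ΩM ^ 3 * a ^ 3 - 12 * ΩM ^ 2 * ΩR * a ^ 2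
      - 9 * ΩM ^ 4 * H0 ^ 2 * t ^ 2 + 24 * ΩM ^ 2 * ΩR ^ ((3:ℝ)/2) * H0 * t)
    (t1 : ℝ) (ht1 : t1 = 8 * ΩR ^ ((3:ℝ)/2) / (3 * ΩM ^ 2 * H0)) :
    ∀ t : ℝ, t1 ≤ t →
      1 ≤ X t ∧
      P ((ΩR / ΩM) * (1 + 2 * Real.cosh
          ((1/3) * Real.log (X t + Real.sqrt ((X t) ^ 2 - 1))))) t = 0 := by
  intro t ht
  set r := ΩR ^ ((3:ℝ)/2) with hr
  have hrpos : 0 < r := Real.rpow_pos_of_pos hR _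
  have hr2 : ΩR ^ 3 = r ^ 2 := by
    rw [hr, ← Real.rpow_natCast (ΩR ^ ((3:ℝ)/2)) 2, ← Real.rpow_mul hR.le]
    norm_num
  have hX' : X t = 1 - 3 * (ΩM ^ 2 / r) * H0 * t
      + (9/8) * (ΩM ^ 4 / r ^ 2) * H0 ^ 2 * t ^ 2 := by
    rw [hX t, hr2]
  -- t ≥ t1 gives 8 r ≤ 3 ΩM² H0 t
  have hA : 8 * r ≤ 3 * ΩM ^ 2 * H0 * t := by
    rw [ht1, div_le_iff₀ (by positivity)] at ht
    nlinarith [ht]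
  have htpos : 0 < t := by
    have h0 : 0 < 3 * ΩM ^ 2 * H0 := by positivity
    nlinarith
  have hx1 : 1 ≤ X t := by
    rw [hX']
    have h1 : 0 < ΩM ^ 2 * H0 * t := by positivity
    have key : 0 ≤ (3 * ΩM ^ 2 * H0 * t) * (3 * ΩM ^ 2 * H0 * t - 8 * r) := by
      nlinarith
    have : (9/8) * (ΩM ^ 4 / r ^ 2) * H0 ^ 2 * t ^ 2 - 3 * (ΩM ^ 2 / r) * H0 * t
        = ((3 * ΩM ^ 2 * H0 * t) * (3 * ΩM ^ 2 * H0 * t - 8 * r)) / (8 * r ^ 2) := by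
      field_simp
      ring
    nlinarith [div_nonneg key (by positivity : (0:ℝ) ≤ 8 * r ^ 2), this]
  refine ⟨hx1, ?_⟩
  set x := X t with hxdef
  have hx2 : 0 ≤ x ^ 2 - 1 := by nlinarith
  have hsq : Real.sqrt (x ^ 2 - 1) ^ 2 = x ^ 2 - 1 := Real.sq_sqrt hx2
  set s := x + Real.sqrt (x ^ 2 - 1) with hs
  have hs0 : 0 < s := by
    have := Real.sqrt_nonneg (x ^ 2 - 1)
    nlinarith
  have hinv : s⁻¹ = x - Real.sqrt (x ^ 2 - 1) := by
    have hmul : s * (x - Real.sqrt (x ^ 2 - 1)) = 1 := by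
      rw [hs]; nlinarith [hsq]
    field_simp [hs0.ne'] at hmul ⊢
    linarith [hmul]
  set c := Real.cosh ((1/3) * Real.log s) with hc
  have hcl : Real.cosh (Real.log s) = x := by
    rw [Real.cosh_log hs0, hinv, hs]; ring
  have hkey : 4 * c ^ 3 - 3 * c = x := by
    have h3 : (3:ℝ) * ((1/3) * Real.log s) = Real.log s := by ring
    have := Real.cosh_three_mul ((1/3) * Real.log s)
    rw [h3, hcl] at this
    linarith [this]
  rw [hP]
  have hM' : ΩM ≠ 0 := hM.ne'
  linear_combination (norm := (field_simp [hM', hrpos.ne']; ring))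
    (8 * r ^ 2) * hkey + (8 * r ^ 2) * hX' + (32 * c ^ 3 - 24 * c - 8) * hr2
end

section
/- Let a_s > 0 and t_s be real, and define a(t) = { a_s^{3/2}·cosh((3/2)·√Ω_Λ·H₀·(t − t_s)) + √(a_s³ + Ω_M/Ω_Λ)·sinh((3/2)·√Ω_Λ·H₀·(t − t_s)) }^{2/3} for t ≥ t_s. Then a(t_s) = a_s, a(t) > 0 for all t ≥ t_s, and a is differentiable on (t_s, ∞) with derivative satisfying (a'(t))² = H₀²·(Ω_M/a(t) + Ω_Λ·a(t)²) for all t > t_s. -/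
open Real

/-- Let `a_s > 0` and `t_s` be real, and define
`a(t) = { a_s^{3/2}·cosh((3/2)·√Ω_Λ·H₀·(t − t_s)) + √(a_s³ + Ω_M/Ω_Λ)·sinh((3/2)·√Ω_Λ·H₀·(t − t_s)) }^{2/3}`.
Then `a(t_s) = a_s`, `a(t) > 0` for all `t ≥ t_s`, and `a` is differentiable on `(t_s, ∞)`
with `(a'(t))² = H₀²·(Ω_M/a(t) + Ω_Λ·a(t)²)` for all `t > t_s`. -/
theorem stmt_14 (ΩM ΩΛ H0 : ℝ) (hM : 0 < ΩM) (hΛ : 0 < ΩΛ) (hH : 0 < H0)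
    (as ts : ℝ) (has : 0 < as)
    (a : ℝ → ℝ)
    (ha : ∀ t, a t =
      (as ^ ((3:ℝ)/2) * Real.cosh ((3/2) * Real.sqrt ΩΛ * H0 * (t - ts)) +
        Real.sqrt (as ^ 3 + ΩM / ΩΛ) * Real.sinh ((3/2) * Real.sqrt ΩΛ * H0 * (t - ts)))
        ^ ((2:ℝ)/3)) :
    a ts = as ∧
    (∀ t : ℝ, ts ≤ t → 0 < a t) ∧
    (∀ t : ℝ, ts < t →
      DifferentiableAt ℝ a t ∧
      (deriv a t) ^ 2 = H0 ^ 2 * (ΩM / a t + ΩΛ * (a t) ^ 2)) := by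
  set A : ℝ := as ^ ((3:ℝ)/2) with hAdef
  set B : ℝ := Real.sqrt (as ^ 3 + ΩM / ΩΛ) with hBdef
  set c0 : ℝ := (3/2) * Real.sqrt ΩΛ * H0 with hc0def
  set f : ℝ → ℝ := fun t => A * Real.cosh (c0 * (t - ts)) + B * Real.sinh (c0 * (t - ts))
    with hfdef
  have hA : 0 < A := Real.rpow_pos_of_pos has _
  have hpos : 0 < as ^ 3 + ΩM / ΩΛ := by positivity
  have hB : 0 < B := Real.sqrt_pos.2 hpos
  have hB2 : B ^ 2 = as ^ 3 + ΩM / ΩΛ := Real.sq_sqrt hpos.le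
  have hA2 : A ^ 2 = as ^ 3 := by
    rw [hAdef, ← Real.rpow_natCast (as ^ ((3:ℝ)/2)) 2, ← Real.rpow_mul has.le]
    norm_num
  have hc0 : 0 ≤ c0 := by positivity
  have hc02 : c0 ^ 2 = (9/4) * ΩΛ * H0 ^ 2 := by
    rw [hc0def]
    have h := Real.sq_sqrt hΛ.le
    nlinarith [h]
  have haf : ∀ t, a t = f t ^ ((2:ℝ)/3) := fun t => ha t
  have hfpos : ∀ t, ts ≤ t → 0 < f t := by
    intro t ht
    have harg : 0 ≤ c0 * (t - ts) := mul_nonneg hc0 (by linarith)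
    have h1 : 1 ≤ Real.cosh (c0 * (t - ts)) := Real.one_le_cosh _
    have h2 : 0 ≤ Real.sinh (c0 * (t - ts)) := Real.sinh_nonneg_iff.2 harg
    have : 0 < A * Real.cosh (c0 * (t - ts)) + B * Real.sinh (c0 * (t - ts)) := by
      nlinarith
    simpa [hfdef] using this
  refine ⟨?_, ?_, ?_⟩
  · rw [haf ts]
    have : f ts = A := by simp [hfdef]
    rw [this, hAdef, ← Real.rpow_mul has.le]
    norm_num
  · intro t ht
    rw [haf t]
    exact Real.rpow_pos_of_pos (hfpos t ht) _
  · intro t ht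
    have hx : 0 < f t := hfpos t ht.le
    -- derivative of f
    have hu : HasDerivAt (fun t : ℝ => c0 * (t - ts)) c0 t := by
      simpa using ((hasDerivAt_id t).sub_const ts).const_mul c0
    have hcosh : HasDerivAt (fun t : ℝ => Real.cosh (c0 * (t - ts)))
        (Real.sinh (c0 * (t - ts)) * c0) t := (Real.hasDerivAt_cosh _).comp t hu
    have hsinh : HasDerivAt (fun t : ℝ => Real.sinh (c0 * (t - ts)))
        (Real.cosh (c0 * (t - ts)) * c0) t := (Real.hasDerivAt_sinh _).comp t hu
    have hf' : HasDerivAt f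
        (A * (Real.sinh (c0 * (t - ts)) * c0) + B * (Real.cosh (c0 * (t - ts)) * c0)) t := by
      exact (hcosh.const_mul A).add (hsinh.const_mul B)
    have ha' : HasDerivAt a
        ((A * (Real.sinh (c0 * (t - ts)) * c0) + B * (Real.cosh (c0 * (t - ts)) * c0)) *
          ((2:ℝ)/3) * f t ^ ((2:ℝ)/3 - 1)) t := by
      have := hf'.rpow_const (p := (2:ℝ)/3) (Or.inl hx.ne')
      have heq : a = fun t => f t ^ ((2:ℝ)/3) := funext haf
      rw [heq]
      exact this
    refine ⟨ha'.differentiableAt, ?_⟩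
    rw [ha'.deriv, haf t]
    set s := Real.sinh (c0 * (t - ts))
    set cc := Real.cosh (c0 * (t - ts))
    set q : ℝ := f t ^ ((1:ℝ)/3) with hqdef
    have hq : 0 < q := Real.rpow_pos_of_pos hx _
    have hq3 : q ^ 3 = f t := by
      rw [hqdef, ← Real.rpow_natCast (f t ^ ((1:ℝ)/3)) 3, ← Real.rpow_mul hx.le]
      norm_num
    have h23 : f t ^ ((2:ℝ)/3) = q ^ 2 := by
      rw [hqdef, ← Real.rpow_natCast (f t ^ ((1:ℝ)/3)) 2, ← Real.rpow_mul hx.le]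
      norm_num
    have hneg : f t ^ ((2:ℝ)/3 - 1) = q⁻¹ := by
      have : (2:ℝ)/3 - 1 = -((1:ℝ)/3) := by norm_num
      rw [this, Real.rpow_neg hx.le, hqdef]
    rw [h23, hneg]
    have hft : f t = A * cc + B * s := rfl
    have hcs : cc ^ 2 - s ^ 2 = 1 := Real.cosh_sq_sub_sinh_sq _
    have key : ΩΛ * B ^ 2 = ΩΛ * A ^ 2 + ΩM := by
      rw [hB2, hA2]; field_simp
    have hq3' : q ^ 3 = A * cc + B * s := by rw [hq3, hft]
    have hΛ0 : (ΩΛ : ℝ) ≠ 0 := hΛ.ne'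
    have hkey : ΩΛ * H0 ^ 2 * (A * s + B * cc) ^ 2 =
        H0 ^ 2 * ΩM + H0 ^ 2 * ΩΛ * (q ^ 3) ^ 2 := by
      rw [hq3']
      linear_combination H0 ^ 2 * (cc ^ 2 - s ^ 2) * key + H0 ^ 2 * ΩM * hcs
    apply mul_right_cancel₀ (pow_ne_zero 2 hq.ne')
    have expand : ((A * (s * c0) + B * (cc * c0)) * ((2:ℝ)/3) * q⁻¹) ^ 2 * q ^ 2 =
        (4/9) * c0 ^ 2 * (A * s + B * cc) ^ 2 := by
      field_simp
      ring
    have rhs : H0 ^ 2 * (ΩM / q ^ 2 + ΩΛ * (q ^ 2) ^ 2) * q ^ 2 =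
        H0 ^ 2 * ΩM + H0 ^ 2 * ΩΛ * (q ^ 3) ^ 2 := by
      field_simp
    rw [expand, rhs]
    linear_combination hkey + (4/9) * (A * s + B * cc) ^ 2 * hc02
end

section
/- On the open interval (0, t_*), the function a₁(t) = (Ω_R/Ω_M)·[1 − 2·sin((1/3)·arcsin X(t))] is strictly positive, differentiable, and its derivative satisfies (a₁'(t))² = H₀²·(Ω_R/a₁(t)² + Ω_M/a₁(t)) for all t ∈ (0, t_*). -/
open Real Set

set_option maxHeartbeats 1000000 in
/-- On `(0, t_*)`, the function `a₁(t) = (Ω_R/Ω_M)·[1 − 2·sin((1/3)·arcsin X(t))]`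
is strictly positive, differentiable, and its derivative satisfies
`(a₁'(t))² = H₀²·(Ω_R/a₁(t)² + Ω_M/a₁(t))` for all `t ∈ (0, t_*)`. -/
theorem stmt_15 (ΩR ΩM H0 : ℝ) (hR : 0 < ΩR) (hM : 0 < ΩM) (hH : 0 < H0)
    (X : ℝ → ℝ)
    (hX : ∀ t, X t = 1 - 3 * (ΩM ^ 2 / ΩR ^ ((3:ℝ)/2)) * H0 * t
      + (9/8) * (ΩM ^ 4 / ΩR ^ 3) * H0 ^ 2 * t ^ 2)
    (tstar : ℝ) (htstar : tstar = 4 * ΩR ^ ((3:ℝ)/2) / (3 * ΩM ^ 2 * H0))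
    (a1 : ℝ → ℝ)
    (ha1 : ∀ t, a1 t = (ΩR / ΩM) * (1 - 2 * Real.sin ((1/3) * Real.arcsin (X t)))) :
    ∀ t ∈ Ioo (0:ℝ) tstar,
      0 < a1 t ∧ DifferentiableAt ℝ a1 t ∧
      (deriv a1 t) ^ 2 = H0 ^ 2 * (ΩR / (a1 t) ^ 2 + ΩM / a1 t) := by
  intro t ht
  obtain ⟨ht0, htT⟩ := ht
  set R : ℝ := ΩR ^ ((3:ℝ)/2) with hRdef
  have hRpos : 0 < R := Real.rpow_pos_of_pos hR _
  have hR2 : R ^ 2 = ΩR ^ 3 := by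
    have h1 : R ^ 2 = R ^ (2:ℝ) := (Real.rpow_natCast R 2).symm ▸ by norm_num
    rw [h1, hRdef, ← Real.rpow_mul hR.le]
    norm_num
  set k : ℝ := 3 * ΩM ^ 2 * H0 / R with hkdef
  have hkpos : 0 < k := by positivity
  have hu0 : 0 < k * t := by positivity
  have hu4 : k * t < 4 := by
    have hts : tstar = 4 / k := by
      rw [htstar, hkdef]; field_simp
    have : t < 4 / k := hts ▸ htT
    calc k * t < k * (4 / k) := by exact mul_lt_mul_of_pos_left this hkpos
    _ = 4 := by field_simp
  have hXk : X t = 1 - k * t + (k * t) ^ 2 / 8 := by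
    rw [hX t, hkdef]
    have hRne : R ≠ 0 := ne_of_gt hRpos
    have hORne : (ΩR:ℝ) ^ 3 ≠ 0 := by positivity
    field_simp
    rw [← hR2]; ring
  -- bounds on X
  have hX1 : X t < 1 := by nlinarith [hXk, hu0, hu4]
  have hXm1 : -1 < X t := by nlinarith [hXk, sq_nonneg (k * t - 4)]
  -- arcsin facts
  set θ : ℝ := (1/3) * Real.arcsin (X t) with hθdef
  set s : ℝ := Real.sin θ with hsdef
  set c : ℝ := Real.cos θ with hcdef
  have harc_lt : Real.arcsin (X t) < π / 2 := Real.arcsin_lt_pi_div_two.mpr hX1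
  have harc_gt : -(π / 2) < Real.arcsin (X t) := Real.neg_pi_div_two_lt_arcsin.mpr hXm1
  have hpi : 0 < π := Real.pi_pos
  have hs_lt : s < 1/2 := by
    have h1 : Real.sin θ < Real.sin (π/6) := by
      apply Real.sin_lt_sin_of_lt_of_le_pi_div_two (by rw [hθdef]; linarith)
        (by linarith) (by rw [hθdef]; linarith)
    rwa [Real.sin_pi_div_six] at h1
  have hs_gt : -(1/2) < s := by
    have h1 : Real.sin (-(π/6)) < Real.sin θ := by
      apply Real.sin_lt_sin_of_lt_of_le_pi_div_two (by linarith)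
        (by rw [hθdef]; linarith) (by rw [hθdef]; linarith)
    rwa [Real.sin_neg, Real.sin_pi_div_six] at h1
  have hapos : 0 < a1 t := by
    rw [ha1 t, ← hθdef, ← hsdef]
    have : 0 < 1 - 2 * s := by linarith
    positivity
  -- triple angle
  have hXs : X t = 3 * s - 4 * s ^ 3 := by
    have h1 : Real.sin (3 * θ) = X t := by
      rw [hθdef, show 3 * ((1/3) * Real.arcsin (X t)) = Real.arcsin (X t) by ring,
        Real.sin_arcsin hXm1.le hX1.le]
    rw [← h1, Real.sin_three_mul, ← hsdef]
  have hc2 : c ^ 2 = 1 - s ^ 2 := by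
    rw [hcdef, hsdef, Real.cos_sq']
  -- sqrt
  set w : ℝ := Real.sqrt (1 - X t ^ 2) with hwdef
  have hXsq : X t ^ 2 < 1 := by nlinarith
  have hw2 : w ^ 2 = 1 - X t ^ 2 := Real.sq_sqrt (by nlinarith)
  have hwpos : 0 < w := Real.sqrt_pos.mpr (by nlinarith)
  -- derivative of X
  set x' : ℝ := -(3 * (ΩM ^ 2 / R) * H0) + (9/8) * (ΩM ^ 4 / ΩR ^ 3) * H0 ^ 2 * (2 * t) with hx'def
  have hXfun : X = fun u => 1 - 3 * (ΩM ^ 2 / R) * H0 * u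
      + (9/8) * (ΩM ^ 4 / ΩR ^ 3) * H0 ^ 2 * u ^ 2 := funext hX
  have hXd : HasDerivAt X x' t := by
    rw [hXfun, hx'def]
    have h1 : HasDerivAt (fun u : ℝ => 1 - 3 * (ΩM ^ 2 / R) * H0 * u
        + (9/8) * (ΩM ^ 4 / ΩR ^ 3) * H0 ^ 2 * u ^ 2)
        (0 - 3 * (ΩM ^ 2 / R) * H0 * 1 + (9/8) * (ΩM ^ 4 / ΩR ^ 3) * H0 ^ 2 * (2 * t ^ 1)) t := by
      exact ((hasDerivAt_const t (1:ℝ)).sub (((hasDerivAt_id t)).const_mul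
        (3 * (ΩM ^ 2 / R) * H0))).add ((hasDerivAt_pow 2 t).const_mul
        ((9/8) * (ΩM ^ 4 / ΩR ^ 3) * H0 ^ 2))
    convert h1 using 1
    ring
  have harcd : HasDerivAt (fun u => Real.arcsin (X u)) (1 / w * x') t := by
    have := (Real.hasDerivAt_arcsin (ne_of_gt hXm1) (ne_of_lt hX1)).comp t hXd
    simpa [Function.comp_def, hwdef] using this
  have hθd : HasDerivAt (fun u => (1/3) * Real.arcsin (X u)) ((1/3) * (1 / w * x')) t :=
    harcd.const_mul (1/3)
  have hsind : HasDerivAt (fun u => Real.sin ((1/3) * Real.arcsin (X u)))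
      (c * ((1/3) * (1 / w * x'))) t := by
    have := (Real.hasDerivAt_sin θ).comp t hθd
    simpa [Function.comp_def, hcdef, hθdef] using this
  set D : ℝ := (ΩR / ΩM) * -(2 * (c * ((1/3) * (1 / w * x')))) with hDdef
  have ha1d : HasDerivAt a1 D t := by
    have h2 : HasDerivAt (fun u => (ΩR / ΩM) * (1 - 2 * Real.sin ((1/3) * Real.arcsin (X u)))) D t := by
      rw [hDdef]
      exact ((hsind.const_mul 2).const_sub 1).const_mul (ΩR / ΩM)
    have : a1 = fun u => (ΩR / ΩM) * (1 - 2 * Real.sin ((1/3) * Real.arcsin (X u))) := funext ha1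
    rw [this]
    exact h2
  refine ⟨hapos, ha1d.differentiableAt, ?_⟩
  rw [ha1d.deriv, ha1 t, ← hθdef, ← hsdef]
  -- algebraic facts
  have hx'2 : x' ^ 2 = (9 * ΩM ^ 4 * H0 ^ 2 / ΩR ^ 3) * ((1 + X t) / 2) := by
    have hx'k : x' = -k + k ^ 2 * t / 4 := by
      rw [hx'def, hkdef]
      have hRne : R ≠ 0 := ne_of_gt hRpos
      field_simp
      rw [← hR2]; ring
    have hk2 : k ^ 2 = 9 * ΩM ^ 4 * H0 ^ 2 / ΩR ^ 3 := by
      rw [hkdef, div_pow, hR2]; ring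
    rw [hx'k, ← hk2, hXk]
    ring
  have hfac1 : 1 - X t = (1 - 2*s)^2 * (1 + s) := by rw [hXs]; ring
  have hfac2 : 1 + X t = (1 + 2*s)^2 * (1 - s) := by rw [hXs]; ring
  have hw2' : w ^ 2 = ((1 - 2*s)^2 * (1 + s)) * ((1 + 2*s)^2 * (1 - s)) := by
    rw [hw2, ← hfac1, ← hfac2]; ring
  have hL : D ^ 2 = (ΩR / ΩM)^2 * (4/9) * c^2 * x'^2 / w^2 := by
    rw [hDdef]; ring
  rw [hL, hc2, hx'2, hfac2, hw2']
  have h1 : (0:ℝ) < 1 - 2*s := by linarith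
  have h2 : (0:ℝ) < 1 + 2*s := by linarith
  have h3 : (0:ℝ) < 1 - s := by linarith
  have h4 : (0:ℝ) < 1 + s := by linarith
  field_simp
  rw [div_eq_div_iff (mul_pos (by linarith) (pow_pos (by linarith) 2)).ne' (pow_pos (by linarith) 2).ne']
  ring
end

section
/- On the open interval (t_*, t₁), the function a₂(t) = (Ω_R/Ω_M)·[1 + 2·cos((1/3)·arccos X(t))] is strictly positive, differentiable, and its derivative satisfies (a₂'(t))² = H₀²·(Ω_R/a₂(t)² + Ω_M/a₂(t)) for all t ∈ (t_*, t₁). -/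
open Real Set

set_option maxHeartbeats 1000000 in
/-- On `(t_*, t₁)`, the function `a₂(t) = (Ω_R/Ω_M)·[1 + 2·cos((1/3)·arccos X(t))]`
is strictly positive, differentiable, and its derivative satisfies
`(a₂'(t))² = H₀²·(Ω_R/a₂(t)² + Ω_M/a₂(t))` for all `t ∈ (t_*, t₁)`. -/
theorem stmt_16 (ΩR ΩM H0 : ℝ) (hR : 0 < ΩR) (hM : 0 < ΩM) (hH : 0 < H0)
    (X : ℝ → ℝ)
    (hX : ∀ t, X t = 1 - 3 * (ΩM ^ 2 / ΩR ^ ((3:ℝ)/2)) * H0 * t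
      + (9/8) * (ΩM ^ 4 / ΩR ^ 3) * H0 ^ 2 * t ^ 2)
    (tstar t1 : ℝ) (htstar : tstar = 4 * ΩR ^ ((3:ℝ)/2) / (3 * ΩM ^ 2 * H0))
    (ht1 : t1 = 8 * ΩR ^ ((3:ℝ)/2) / (3 * ΩM ^ 2 * H0))
    (a2 : ℝ → ℝ)
    (ha2 : ∀ t, a2 t = (ΩR / ΩM) * (1 + 2 * Real.cos ((1/3) * Real.arccos (X t)))) :
    ∀ t ∈ Ioo tstar t1,
      0 < a2 t ∧ DifferentiableAt ℝ a2 t ∧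
      (deriv a2 t) ^ 2 = H0 ^ 2 * (ΩR / (a2 t) ^ 2 + ΩM / a2 t) := by
  intro t ht
  obtain ⟨htl, htr⟩ := ht
  set P := ΩR ^ ((3:ℝ)/2) with hPdef
  have hPpos : 0 < P := Real.rpow_pos_of_pos hR _
  have hP2 : P ^ 2 = ΩR ^ 3 := by
    rw [hPdef, ← Real.rpow_natCast (ΩR ^ ((3:ℝ)/2)) 2, ← Real.rpow_mul hR.le,
      ← Real.rpow_natCast ΩR 3]
    norm_num
  set q := 3 * ΩM ^ 2 * H0 with hqdef
  have hqpos : 0 < q := by positivity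
  have hxval : X t = 1 - (q*t)/P + (q*t)^2/(8*P^2) := by
    rw [hX t, ← hP2, hqdef]
    field_simp
    try ring
    try tauto
  have h4 : 4 * P < q * t := by
    rw [htstar, div_lt_iff₀ hqpos] at htl
    linarith [mul_comm t q]
  have h8 : q * t < 8 * P := by
    rw [ht1, lt_div_iff₀ hqpos] at htr
    linarith [mul_comm t q]
  have hx1' : X t = 1 + (q*t)*(q*t - 8*P)/(8*P^2) := by
    rw [hxval]; field_simp; ring
  have hxm1' : X t = -1 + (q*t - 4*P)^2/(8*P^2) := by
    rw [hxval]; field_simp; ring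
  have hX1 : X t < 1 := by
    have hn : (q*t)*(q*t-8*P) < 0 :=
      mul_neg_of_pos_of_neg (by linarith) (by linarith)
    have : (q*t)*(q*t-8*P)/(8*P^2) < 0 := div_neg_of_neg_of_pos hn (by positivity)
    linarith [hx1']
  have hXm1 : -1 < X t := by
    have hp : 0 < (q*t - 4*P)^2 := pow_pos (by linarith) 2
    have : 0 < (q*t - 4*P)^2/(8*P^2) := div_pos hp (by positivity)
    linarith [hxm1']
  have hx_ne1 : X t ≠ 1 := ne_of_lt hX1
  have hx_nem1 : X t ≠ -1 := ne_of_gt hXm1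
  have h1x : 0 < 1 - X t := by linarith
  have h2x : 0 < 1 + X t := by linarith
  have hxx : 0 < 1 - X t ^ 2 := by nlinarith [mul_pos h1x h2x]
  set w := (1/3) * Real.arccos (X t) with hwdef
  set y := Real.cos w with hydef
  have hθpos : 0 < Real.arccos (X t) := Real.arccos_pos.mpr hX1
  have hθle : Real.arccos (X t) ≤ π := Real.arccos_le_pi _
  have hy : 0 < y := by
    apply Real.cos_pos_of_mem_Ioo
    constructor
    · rw [hwdef]; linarith [Real.pi_pos, hθpos]
    · rw [hwdef]; linarith [Real.pi_pos, hθle]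
  have ha2t : a2 t = (ΩR/ΩM) * (1 + 2*y) := ha2 t
  have hpos : 0 < a2 t := by
    rw [ha2t]; exact mul_pos (div_pos hR hM) (by linarith)
  -- derivative
  set S := Real.sqrt (1 - X t ^ 2) with hSdef
  have hSsq : S ^ 2 = 1 - X t ^ 2 := Real.sq_sqrt hxx.le
  have hSpos : 0 < S := Real.sqrt_pos.mpr hxx
  set D := -(3 * (ΩM ^ 2 / P) * H0) + 9/4 * (ΩM ^ 4 / P ^ 2) * H0 ^ 2 * t with hDdef
  have hXd : HasDerivAt X D t := by
    have h1 := (hasDerivAt_id t).const_mul (3 * (ΩM ^ 2 / P) * H0)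
    have h2 := (hasDerivAt_pow 2 t).const_mul (9/8 * (ΩM ^ 4 / ΩR ^ 3) * H0 ^ 2)
    have h3 := ((hasDerivAt_const t (1:ℝ)).sub h1).add h2
    have h : X = fun u : ℝ => 1 - 3 * (ΩM ^ 2 / P) * H0 * u
        + 9/8 * (ΩM ^ 4 / ΩR ^ 3) * H0 ^ 2 * u ^ 2 := funext hX
    rw [h]
    refine h3.congr_deriv ?_
    rw [hDdef, ← hP2]
    push_cast
    field_simp
    ring
  have harc : HasDerivAt (fun u => Real.arccos (X u)) (-(1 / S) * D) t :=
    (Real.hasDerivAt_arccos hx_nem1 hx_ne1).comp t hXd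
  have hw : HasDerivAt (fun u => (1/3) * Real.arccos (X u)) ((1/3) * (-(1 / S) * D)) t :=
    harc.const_mul (1/3)
  have hcosd : HasDerivAt (fun u => Real.cos ((1/3) * Real.arccos (X u)))
      (-Real.sin w * ((1/3) * (-(1 / S) * D))) t :=
    (Real.hasDerivAt_cos w).comp (h₂ := Real.cos) t hw
  have hfull : HasDerivAt a2
      ((ΩR/ΩM) * (2 * (-Real.sin w * ((1/3) * (-(1 / S) * D))))) t := by
    have h : a2 = fun u => (ΩR / ΩM) * (1 + 2 * Real.cos ((1/3) * Real.arccos (X u))) :=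
      funext ha2
    rw [h]
    exact ((hcosd.const_mul 2).const_add 1).const_mul (ΩR/ΩM)
  refine ⟨hpos, hfull.differentiableAt, ?_⟩
  rw [hfull.deriv]
  -- algebraic identities
  have hsin : Real.sin w ^ 2 = 1 - y ^ 2 := by
    have := Real.sin_sq_add_cos_sq w; rw [hydef]; linarith
  have htriple : X t = 4*y^3 - 3*y := by
    have h3 : 3 * w = Real.arccos (X t) := by rw [hwdef]; ring
    have := Real.cos_arccos hXm1.le hX1.le
    rw [← this, ← h3, Real.cos_three_mul]
  have hD2 : D ^ 2 = 9 * ΩM ^ 4 * H0 ^ 2 * (X t + 1) / (2 * ΩR ^ 3) := by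
    rw [hxval, hDdef, ← hP2, hqdef]
    field_simp
    ring
  have key : ((ΩR/ΩM) * (2 * (-Real.sin w * ((1/3) * (-(1 / S) * D))))) ^ 2
      = (ΩR/ΩM)^2 * (4/9) * (Real.sin w)^2 * (D^2 / S^2) := by ring
  rw [key, hsin, hSsq, hD2, ha2t, htriple]
  have hyne : (1:ℝ) + 2*y ≠ 0 := by positivity
  have hSne : (1:ℝ) - (4*y^3-3*y) ^ 2 ≠ 0 := by
    rw [← htriple]; exact ne_of_gt hxx
  field_simp
  rw [div_eq_iff (by rw [show (1:ℝ) - y^2*(4*y^2-3)^2 = 1 - (4*y^3-3*y)^2 by ring]; exact hSne)]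
  ring
end

section
/- For every real a_s with 0 < a_s ≤ (Ω_M/Ω_Λ)^{1/3}, the integral ∫_{a_s}^{(Ω_M/Ω_Λ)^{1/3}} (Ω_M/x + Ω_Λ·x²)^{-1/2} dx equals (2/(3·√Ω_Λ))·ln[ √Ω_M·(1 + √2) / (√Ω_Λ·a_s^{3/2} + √(Ω_M + Ω_Λ·a_s³)) ]. -/
open Real MeasureTheory intervalIntegral

lemma aux_deriv (M Λ : ℝ) (hM : 0 < M) (hΛ : 0 < Λ) {x : ℝ} (hx : 0 < x) :
    HasDerivAt (fun y : ℝ => (2 / (3 * Real.sqrt Λ)) *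
        Real.log (Real.sqrt Λ * y ^ ((3:ℝ)/2) + Real.sqrt (M + Λ * y ^ 3)))
      ((M / x + Λ * x ^ 2) ^ (-(1:ℝ)/2)) x := by
  have hq : 0 < M + Λ * x ^ 3 := by positivity
  have h1 : HasDerivAt (fun y : ℝ => y ^ ((3:ℝ)/2)) (((3:ℝ)/2) * x ^ ((1:ℝ)/2)) x := by
    have := Real.hasDerivAt_rpow_const (p := (3:ℝ)/2) (Or.inl hx.ne')
    convert this using 1; norm_num
  have h2 : HasDerivAt (fun y : ℝ => M + Λ * y ^ 3) (Λ * (3 * x ^ 2)) x := by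
    simpa using ((hasDerivAt_pow 3 x).const_mul Λ).const_add M
  have h3 : HasDerivAt (fun y : ℝ => Real.sqrt (M + Λ * y ^ 3))
      (Λ * (3 * x ^ 2) / (2 * Real.sqrt (M + Λ * x ^ 3))) x := h2.sqrt hq.ne'
  have hg : 0 < Real.sqrt Λ * x ^ ((3:ℝ)/2) + Real.sqrt (M + Λ * x ^ 3) := by positivity
  have h4 := (((h1.const_mul (Real.sqrt Λ)).add h3).log hg.ne').const_mul (2 / (3 * Real.sqrt Λ))
  refine h4.congr_deriv ?_
  symm
  simp only [Pi.add_apply]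
  set s := Real.sqrt x with hs
  set t := Real.sqrt (M + Λ * x ^ 3) with ht
  set l := Real.sqrt Λ with hl
  have hs2 : s ^ 2 = x := Real.sq_sqrt hx.le
  have ht2 : t ^ 2 = M + Λ * x ^ 3 := Real.sq_sqrt hq.le
  have hl2 : l ^ 2 = Λ := Real.sq_sqrt hΛ.le
  have hspos : 0 < s := Real.sqrt_pos.2 hx
  have htpos : 0 < t := Real.sqrt_pos.2 hq
  have hlpos : 0 < l := Real.sqrt_pos.2 hΛ
  have hx12 : x ^ ((1:ℝ)/2) = s := by rw [hs, Real.sqrt_eq_rpow]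
  have hx32 : x ^ ((3:ℝ)/2) = x * s := by
    have h : x ^ ((3:ℝ)/2) = x ^ ((1:ℝ)+(1:ℝ)/2) := by norm_num
    rw [h, Real.rpow_add hx, Real.rpow_one, hx12]
  have hlhs : (M / x + Λ * x ^ 2) ^ (-(1:ℝ)/2) = s / t := by
    have h : M / x + Λ * x ^ 2 = (M + Λ * x ^ 3) / x := by field_simp
    rw [h, show (-(1:ℝ)/2) = -(1/2) by norm_num, Real.rpow_neg (by positivity),
      ← Real.sqrt_eq_rpow, Real.sqrt_div hq.le, inv_div]
  rw [hlhs, hx32, hx12]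
  have hgne : l * (x * s) + t ≠ 0 := by positivity
  field_simp
  linear_combination x*s^2*hl2 + Λ*x*hs2

/-- For every real `a_s` with `0 < a_s ≤ (Ω_M/Ω_Λ)^{1/3}`, the integral
`∫_{a_s}^{(Ω_M/Ω_Λ)^{1/3}} (Ω_M/x + Ω_Λ·x²)^{-1/2} dx` equals
`(2/(3·√Ω_Λ))·ln[ √Ω_M·(1 + √2) / (√Ω_Λ·a_s^{3/2} + √(Ω_M + Ω_Λ·a_s³)) ]`. -/
theorem stmt_18 (ΩM ΩΛ : ℝ) (hM : 0 < ΩM) (hΛ : 0 < ΩΛ) :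
    ∀ as : ℝ, 0 < as → as ≤ (ΩM / ΩΛ) ^ ((1:ℝ)/3) →
      ∫ x in as..((ΩM / ΩΛ) ^ ((1:ℝ)/3)), (ΩM / x + ΩΛ * x ^ 2) ^ (-(1:ℝ)/2) =
        (2 / (3 * Real.sqrt ΩΛ)) *
          Real.log (Real.sqrt ΩM * (1 + Real.sqrt 2) /
            (Real.sqrt ΩΛ * as ^ ((3:ℝ)/2) + Real.sqrt (ΩM + ΩΛ * as ^ 3))) := by
  intro a ha hab
  set b := (ΩM / ΩΛ) ^ ((1:ℝ)/3) with hb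
  have hdiv : 0 < ΩM / ΩΛ := div_pos hM hΛ
  have hbpos : 0 < b := Real.rpow_pos_of_pos hdiv _
  have hIcc : ∀ x ∈ Set.uIcc a b, 0 < x := by
    rw [Set.uIcc_of_le hab]
    intro x hx; exact lt_of_lt_of_le ha hx.1
  have hcont : ContinuousOn (fun x : ℝ => (ΩM / x + ΩΛ * x ^ 2) ^ (-(1:ℝ)/2)) (Set.uIcc a b) := by
    apply ContinuousOn.rpow_const
    · exact (continuousOn_const.div continuousOn_id fun x hx => (hIcc x hx).ne').add
        (continuous_const.mul (continuous_pow 2)).continuousOn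
    · intro x hx
      left
      have hx0 := hIcc x hx
      positivity
  have hint : IntervalIntegrable (fun x : ℝ => (ΩM / x + ΩΛ * x ^ 2) ^ (-(1:ℝ)/2))
      volume a b := hcont.intervalIntegrable
  have key := intervalIntegral.integral_eq_sub_of_hasDerivAt
    (f := fun y : ℝ => (2 / (3 * Real.sqrt ΩΛ)) *
        Real.log (Real.sqrt ΩΛ * y ^ ((3:ℝ)/2) + Real.sqrt (ΩM + ΩΛ * y ^ 3)))
    (fun x hx => aux_deriv ΩM ΩΛ hM hΛ (hIcc x hx)) hint
  rw [key]
  have hb32 : b ^ ((3:ℝ)/2) = (ΩM / ΩΛ) ^ ((1:ℝ)/2) := by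
    rw [hb, ← Real.rpow_mul hdiv.le]; norm_num
  have hb3 : b ^ 3 = ΩM / ΩΛ := by
    rw [hb, ← Real.rpow_natCast ((ΩM / ΩΛ) ^ ((1:ℝ)/3)) 3, ← Real.rpow_mul hdiv.le]
    norm_num
  have hgb : Real.sqrt ΩΛ * b ^ ((3:ℝ)/2) + Real.sqrt (ΩM + ΩΛ * b ^ 3)
      = Real.sqrt ΩM * (1 + Real.sqrt 2) := by
    rw [hb32, hb3, ← Real.sqrt_eq_rpow, Real.sqrt_div hM.le,
      mul_div_cancel₀ _ hΛ.ne', show ΩM + ΩM = 2 * ΩM by ring,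
      Real.sqrt_mul (by norm_num : (0:ℝ) ≤ 2)]
    have : Real.sqrt ΩΛ * (Real.sqrt ΩM / Real.sqrt ΩΛ) = Real.sqrt ΩM := by
      field_simp
    rw [this]; ring
  have hga : 0 < Real.sqrt ΩΛ * a ^ ((3:ℝ)/2) + Real.sqrt (ΩM + ΩΛ * a ^ 3) := by
    positivity
  beta_reduce
  rw [hgb, ← mul_sub, ← Real.log_div (by positivity) hga.ne']
end
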